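/- Let P ∈ K[[u_1,…,u_r]][y] be a nonzero polynomial of degree at most d_y in y with only simple roots, i.e., whose discriminant Δ_P := Res_y(P, ∂P/∂y) ∈ K[[u_1,…,u_r]] is nonzero. Let y_0 = Σ_{n∈ℕ^r} c_n u^n ∈ K[[u_1,…,u_r]], with c_0 ≠ 0, be a root of P. Then the ≤_grlex-smallest multi-index k_0 ∈ ℕ^r with i_{S(k_0)} = i_{k_0} − S(k_0) + S²(k_0), which exists since y_0 is a simple root, satisfies |k_0| ≤ ord(Δ_P). -/

import Mathlib

open scoped Classical

/-- Total degree of a multi-index. -/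
def degOf {r : ℕ} (a : Fin r →₀ ℕ) : ℕ := a.sum fun _ v => v

/-- Strict graded lexicographic order on `ℕ^r`. -/
def grlt {r : ℕ} (a b : Fin r →₀ ℕ) : Prop :=
  degOf a < degOf b ∨ (degOf a = degOf b ∧ toLex a < toLex b)

/-- Graded lexicographic order on `ℕ^r`. -/
def grle {r : ℕ} (a b : Fin r →₀ ℕ) : Prop := grlt a b ∨ a = b

/-- `S` is the successor function of `(ℕ^r, ≤_grlex)`. -/
def IsSucc {r : ℕ} (S : (Fin r →₀ ℕ) → (Fin r →₀ ℕ)) : Prop :=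
  ∀ k, grlt k (S k) ∧ ∀ m, grlt k m → grle (S k) m

/-- The truncation `z_k = Σ_{n ≤grlex k} c_n u^n` of a power series. -/
noncomputable def zk {K : Type*} [Field K] {r : ℕ}
    (y0 : MvPowerSeries (Fin r) K) (k : Fin r →₀ ℕ) : MvPowerSeries (Fin r) K :=
  fun n => if grle n k then MvPowerSeries.coeff n y0 else 0

/-- `P_k(u,y) := P(u, z_k + u^(S k) · y)`. -/
noncomputable def Pk {K : Type*} [Field K] {r : ℕ}
    (P : Polynomial (MvPowerSeries (Fin r) K)) (y0 : MvPowerSeries (Fin r) K)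
    (S : (Fin r →₀ ℕ) → (Fin r →₀ ℕ)) (k : Fin r →₀ ℕ) :
    Polynomial (MvPowerSeries (Fin r) K) :=
  P.comp (Polynomial.C (zk y0 k) +
    Polynomial.C ((MvPowerSeries.monomial (S k)) 1) * Polynomial.X)

/-- `d` is the valuation `w(Q)` of a polynomial `Q` with power series coefficients:
the `≤grlex`-least exponent appearing in some coefficient of `Q`. -/
def IsW {K : Type*} [Field K] {r : ℕ}
    (Q : Polynomial (MvPowerSeries (Fin r) K)) (d : Fin r →₀ ℕ) : Prop :=
  (∃ j, MvPowerSeries.coeff d (Q.coeff j) ≠ 0) ∧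
  ∀ e, grlt e d → ∀ j, MvPowerSeries.coeff e (Q.coeff j) = 0

/-- The `(d+e) × (d+e)` Sylvester matrix of two polynomials `P` and `Q`
(with formal degrees `d` and `e`). -/
def sylvester {A : Type*} [CommRing A] (P Q : Polynomial A) (d e : ℕ) :
    Matrix (Fin (d + e)) (Fin (d + e)) A :=
  Matrix.of fun i j =>
    if (j : ℕ) < e then
      (if (j : ℕ) ≤ (i : ℕ) then P.coeff ((i : ℕ) - (j : ℕ)) else 0)
    else
      (if (j : ℕ) - e ≤ (i : ℕ) then Q.coeff ((i : ℕ) - ((j : ℕ) - e)) else 0)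

/-- The discriminant of `P`: the resultant of `P` and `∂P/∂y`, computed as the determinant
of their Sylvester matrix. -/
noncomputable def discrim' {A : Type*} [CommRing A] (P : Polynomial A) : A :=
  (sylvester P (Polynomial.derivative P) P.natDegree (Polynomial.derivative P).natDegree).det

section Grlex
variable {r : ℕ}

lemma degOf_add (a b : Fin r →₀ ℕ) : degOf (a + b) = degOf a + degOf b := by
  simpa [degOf] using Finsupp.sum_add_index' (h := fun _ v => v) (fun _ => rfl) (fun _ _ _ => rfl)

lemma degOf_eq_zero {a : Fin r →₀ ℕ} (h : degOf a = 0) : a = 0 := by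
  ext i
  by_contra hi
  have hmem : i ∈ a.support := Finsupp.mem_support_iff.2 (by simpa using hi)
  have := Finset.sum_eq_zero_iff.1 h i hmem
  simp [this] at hi

lemma toLex_add' (a b : Fin r →₀ ℕ) :
    toLex (a + b) = toLex a + toLex b := rfl

lemma grlt_irrefl (a : Fin r →₀ ℕ) : ¬ grlt a a := by
  rintro (h | ⟨_, h⟩) <;> exact lt_irrefl _ h

lemma grlt_trans {a b c : Fin r →₀ ℕ} (h1 : grlt a b) (h2 : grlt b c) : grlt a c := by
  rcases h1 with h1 | ⟨e1, l1⟩ <;> rcases h2 with h2 | ⟨e2, l2⟩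
  · exact Or.inl (h1.trans h2)
  · exact Or.inl (e2 ▸ h1)
  · exact Or.inl (e1 ▸ h2)
  · exact Or.inr ⟨e1.trans e2, l1.trans l2⟩

lemma grlt_trichotomy (a b : Fin r →₀ ℕ) : grlt a b ∨ a = b ∨ grlt b a := by
  rcases lt_trichotomy (degOf a) (degOf b) with h | h | h
  · exact Or.inl (Or.inl h)
  · rcases lt_trichotomy (toLex a) (toLex b) with h' | h' | h'
    · exact Or.inl (Or.inr ⟨h, h'⟩)
    · exact Or.inr (Or.inl (by exact_mod_cast h'))
    · exact Or.inr (Or.inr (Or.inr ⟨h.symm, h'⟩))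
  · exact Or.inr (Or.inr (Or.inl h))

lemma grlt_asymm {a b : Fin r →₀ ℕ} (h : grlt a b) : ¬ grlt b a :=
  fun h' => grlt_irrefl a (grlt_trans h h')

lemma grle_refl (a : Fin r →₀ ℕ) : grle a a := Or.inr rfl

lemma grlt_of_grle_of_grlt {a b c : Fin r →₀ ℕ} (h1 : grle a b) (h2 : grlt b c) : grlt a c := by
  rcases h1 with h1 | rfl
  · exact grlt_trans h1 h2
  · exact h2

lemma grlt_of_grlt_of_grle {a b c : Fin r →₀ ℕ} (h1 : grlt a b) (h2 : grle b c) : grlt a c := by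
  rcases h2 with h2 | rfl
  · exact grlt_trans h1 h2
  · exact h1

lemma grle_trans {a b c : Fin r →₀ ℕ} (h1 : grle a b) (h2 : grle b c) : grle a c := by
  rcases h1 with h1 | rfl
  · exact Or.inl (grlt_of_grlt_of_grle h1 h2)
  · exact h2

lemma not_grle_of_grlt {a b : Fin r →₀ ℕ} (h : grlt a b) : ¬ grle b a := by
  rintro (h' | rfl)
  · exact grlt_asymm h h'
  · exact grlt_irrefl _ h

lemma grlt_of_not_grle {a b : Fin r →₀ ℕ} (h : ¬ grle a b) : grlt b a := by
  rcases grlt_trichotomy a b with h' | h' | h'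
  · exact absurd (Or.inl h') h
  · exact absurd (Or.inr h') h
  · exact h'

lemma grlt_add_right {a b : Fin r →₀ ℕ} (h : grlt a b) (c : Fin r →₀ ℕ) :
    grlt (a + c) (b + c) := by
  rcases h with h | ⟨e, l⟩
  · exact Or.inl (by simp only [degOf_add]; omega)
  · refine Or.inr ⟨by simp only [degOf_add, e], ?_⟩
    rw [toLex_add', toLex_add']
    exact add_lt_add_left l _

lemma grle_add {a b c d : Fin r →₀ ℕ} (h1 : grle a b) (h2 : grle c d) :
    grle (a + c) (b + d) := by
  have s1 : grle (a + c) (b + c) := by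
    rcases h1 with h1 | rfl
    · exact Or.inl (grlt_add_right h1 c)
    · exact grle_refl _
  have s2 : grle (b + c) (b + d) := by
    rcases h2 with h2 | rfl
    · exact Or.inl (by rw [add_comm b c, add_comm b d]; exact grlt_add_right h2 b)
    · exact grle_refl _
  exact grle_trans s1 s2

lemma grlt_cancel_left {a b c : Fin r →₀ ℕ} (h : grlt (c + a) (c + b)) : grlt a b := by
  rcases grlt_trichotomy a b with h' | rfl | h'
  · exact h'
  · exact absurd h (grlt_irrefl _)
  · exact absurd (by rw [add_comm c a, add_comm c b] at h; exact h)
      (grlt_asymm (grlt_add_right h' c))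

lemma grle_of_le {a b : Fin r →₀ ℕ} (h : a ≤ b) : grle a b := by
  obtain ⟨c, rfl⟩ := le_iff_exists_add.1 h
  rcases eq_or_ne c 0 with rfl | hc
  · simp [grle]
  · refine Or.inl (Or.inl ?_)
    have : degOf c ≠ 0 := fun h0 => hc (degOf_eq_zero h0)
    rw [degOf_add]; omega

lemma grle_zero (a : Fin r →₀ ℕ) : grle 0 a := grle_of_le (zero_le : 0 ≤ a)

lemma degOf_le_of_grle {a b : Fin r →₀ ℕ} (h : grle a b) : degOf a ≤ degOf b := by
  rcases h with (h | ⟨e, _⟩) | rfl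
  · exact h.le
  · exact e.le
  · exact le_rfl

lemma grlt_wf : WellFounded (@grlt r) := by
  have : WellFounded (Prod.Lex ((· < ·) : ℕ → ℕ → Prop)
      ((· < ·) : Lex (Fin r →₀ ℕ) → Lex (Fin r →₀ ℕ) → Prop)) :=
    (WellFounded.prod_lex wellFounded_lt wellFounded_lt)
  refine Subrelation.wf (r := InvImage _ (fun a : Fin r →₀ ℕ => ((degOf a, toLex a) : ℕ ×ₗ Lex (Fin r →₀ ℕ)))) ?_ (InvImage.wf _ this)
  rintro a b (h | ⟨e, l⟩)
  · exact Prod.Lex.left _ _ h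
  · dsimp [InvImage]; rw [e]; exact Prod.Lex.right _ l

end Grlex

section MvLemmas
variable {K : Type*} [Field K] {r : ℕ}
open MvPowerSeries

/-- least grlex exponent in the support of a nonzero series -/
lemma exists_grlex_min (g : MvPowerSeries (Fin r) K) (hg : g ≠ 0) :
    ∃ w, MvPowerSeries.coeff w g ≠ 0 ∧ ∀ e, grlt e w → MvPowerSeries.coeff e g = 0 := by
  have hne : ∃ n, MvPowerSeries.coeff n g ≠ 0 := by
    by_contra h
    push_neg at h
    exact hg (MvPowerSeries.ext fun n => by simpa using h n)
  set T : Set (Fin r →₀ ℕ) := {n | MvPowerSeries.coeff n g ≠ 0}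
  have hT : T.Nonempty := hne
  refine ⟨grlt_wf.min T hT, grlt_wf.min_mem T hT, fun e he => ?_⟩
  by_contra hc
  exact grlt_wf.not_lt_min T (hc : e ∈ T) he

lemma IsW_unique {Q : Polynomial (MvPowerSeries (Fin r) K)} {d d' : Fin r →₀ ℕ}
    (h : IsW Q d) (h' : IsW Q d') : d = d' := by
  rcases grlt_trichotomy d d' with hlt | heq | hlt
  · obtain ⟨j, hj⟩ := h.1
    exact absurd (h'.2 d hlt j) hj
  · exact heq
  · obtain ⟨j, hj⟩ := h'.1
    exact absurd (h.2 d' hlt j) hj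

/-- products: lower bounds on grlex valuations multiply -/
lemma coeff_mul_grle {f h : MvPowerSeries (Fin r) K} {c d : Fin r →₀ ℕ}
    (hf : ∀ p, MvPowerSeries.coeff p f ≠ 0 → grle c p)
    (hh : ∀ q, MvPowerSeries.coeff q h ≠ 0 → grle d q) :
    ∀ e, MvPowerSeries.coeff e (f * h) ≠ 0 → grle (c + d) e := by
  intro e he
  rw [MvPowerSeries.coeff_mul] at he
  obtain ⟨p, hp, hne⟩ := Finset.exists_ne_zero_of_sum_ne_zero he
  have hpq : p.1 + p.2 = e := Finset.HasAntidiagonal.mem_antidiagonal.1 hp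
  have h1 : grle c p.1 := hf _ (left_ne_zero_of_mul hne)
  have h2 : grle d p.2 := hh _ (right_ne_zero_of_mul hne)
  exact hpq ▸ grle_add h1 h2

end MvLemmas

section PolyLemmas
open Polynomial
variable {A : Type*} [CommRing A]

lemma coeff_comp_C_mul_X (Q : A[X]) (μ : A) (j : ℕ) :
    (Q.comp (C μ * X)).coeff j = μ ^ j * Q.coeff j := by
  rw [comp_eq_sum_left, Polynomial.sum, finset_sum_coeff]
  have : ∀ i ∈ Q.support,
      (C (Q.coeff i) * (C μ * X) ^ i).coeff j = if i = j then μ ^ j * Q.coeff j else 0 := by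
    intro i _
    rw [mul_pow, ← C_pow, ← mul_assoc, ← C_mul, coeff_C_mul, coeff_X_pow]
    by_cases h : i = j
    · subst h; rw [if_pos rfl, if_pos rfl, mul_one]; ring
    · rw [if_neg (fun hh => h hh.symm), if_neg h, mul_zero]
  rw [Finset.sum_congr rfl this]
  by_cases hj : j ∈ Q.support
  · rw [Finset.sum_ite_eq' Q.support j, if_pos hj]
  · rw [Finset.sum_ite_eq' Q.support j, if_neg hj]
    rw [Polynomial.notMem_support_iff.1 hj, mul_zero]

lemma coeff_comp_linear (P : A[X]) (z μ : A) (j : ℕ) :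
    (P.comp (C z + C μ * X)).coeff j = μ ^ j * (taylor z P).coeff j := by
  have h : C z + C μ * X = (X + C z).comp (C μ * X) := by
    rw [add_comp, X_comp, C_comp, add_comm]
  rw [h, ← comp_assoc, ← taylor_apply, coeff_comp_C_mul_X]

/-- quadratic remainder form of a polynomial -/
lemma exists_quadratic_remainder (Q : A[X]) :
    ∃ G : A[X], Q = C (Q.coeff 0) + C (Q.coeff 1) * X + X ^ 2 * G := by
  have h2 : X ^ 2 ∣ Q - (C (Q.coeff 0) + C (Q.coeff 1) * X) := by
    rw [Polynomial.X_pow_dvd_iff]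
    intro d hd
    interval_cases d <;> simp
  obtain ⟨G, hG⟩ := h2
  exact ⟨G, by linear_combination (norm := ring_nf) hG⟩

end PolyLemmas

section Bezout
open Polynomial Matrix

variable {A : Type*} [CommRing A]

lemma discrim'_eq_mul (P : A[X]) (hd : P.natDegree ≠ 0) {x : A} (hx : P.eval x = 0) :
    ∃ B : A, discrim' P = B * (derivative P).eval x := by
  set d := P.natDegree with hdd
  set e := (derivative P).natDegree with hee
  set M := _root_.sylvester P (derivative P) d e with hM
  set M' := M.map (C : A → A[X]) with hM'
  set v : Fin (d + e) → A[X] := fun i => X ^ (i : ℕ) with hv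
  have hw : M'ᵀ.mulVec v = fun j : Fin (d + e) =>
      if (j : ℕ) < e then X ^ (j : ℕ) * P else X ^ ((j : ℕ) - e) * derivative P := by
    funext j
    have step : M'ᵀ.mulVec v j = ∑ i : Fin (d + e), C (M i j) * X ^ (i : ℕ) := by
      simp [Matrix.mulVec, dotProduct, hM', Matrix.transpose_apply, Matrix.map_apply, hv]
    rw [step]
    apply Polynomial.ext; intro m
    rw [finset_sum_coeff]
    have hterm : ∀ i : Fin (d + e),
        (C (M i j) * X ^ (i : ℕ)).coeff m = if m = (i : ℕ) then M i j else 0 := by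
      intro i
      rw [coeff_C_mul, coeff_X_pow]
      split_ifs <;> simp
    rw [Finset.sum_congr rfl fun i _ => hterm i]
    have hj := j.isLt
    by_cases hm : m < d + e
    · rw [Finset.sum_eq_single (⟨m, hm⟩ : Fin (d + e))]
      · have hMm : M ⟨m, hm⟩ j = if (j : ℕ) < e then
            (if (j : ℕ) ≤ m then P.coeff (m - (j : ℕ)) else 0)
          else
            (if (j : ℕ) - e ≤ m then (derivative P).coeff (m - ((j : ℕ) - e)) else 0) := rfl
        rw [if_pos rfl, hMm]
        by_cases h1 : (j : ℕ) < e
        · rw [if_pos h1, if_pos h1, mul_comm, coeff_mul_X_pow']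
        · rw [if_neg h1, if_neg h1, mul_comm, coeff_mul_X_pow']
      · intro b _ hb
        rw [if_neg (by simpa using fun h => hb (Fin.ext h.symm))]
      · intro h; exact absurd (Finset.mem_univ _) h
    · rw [Finset.sum_eq_zero fun b _ => if_neg (by have := b.isLt; omega)]
      by_cases h1 : (j : ℕ) < e
      · rw [if_pos h1, mul_comm, coeff_mul_X_pow', if_pos (by omega),
          coeff_eq_zero_of_natDegree_lt (by omega)]
      · rw [if_neg h1, mul_comm, coeff_mul_X_pow', if_pos (by omega),
          coeff_eq_zero_of_natDegree_lt (by omega)]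
  have hpos : 0 < d + e := by omega
  have adjkey : adjugate M'ᵀ *ᵥ (M'ᵀ *ᵥ v) = det M' • v := by
    rw [Matrix.mulVec_mulVec, Matrix.adjugate_mul, Matrix.smul_mulVec,
      Matrix.one_mulVec, Matrix.det_transpose]
  have h0 : det M' = ∑ jj : Fin (d + e), adjugate M'ᵀ ⟨0, hpos⟩ jj *
      (if (jj : ℕ) < e then X ^ (jj : ℕ) * P else X ^ ((jj : ℕ) - e) * derivative P) := by
    have hc := congrFun adjkey ⟨0, hpos⟩
    rw [hw] at hc
    simpa [Matrix.mulVec, dotProduct, hv] using hc.symm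
  have hdet : eval x (det M') = discrim' P := by
    have hmap : M'.map ⇑(evalRingHom x) = M := by
      ext i j; simp [hM', Matrix.map_apply]
    calc eval x (det M') = ((evalRingHom x).mapMatrix M').det := (evalRingHom x).map_det M'
      _ = M.det := by rw [RingHom.mapMatrix_apply, hmap]
      _ = discrim' P := rfl
  refine ⟨∑ jj : Fin (d + e), if (jj : ℕ) < e then 0
      else eval x (adjugate M'ᵀ ⟨0, hpos⟩ jj) * x ^ ((jj : ℕ) - e), ?_⟩
  have hev := congrArg (eval x) h0
  rw [hdet, eval_finset_sum] at hev
  rw [hev, Finset.sum_mul]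
  refine Finset.sum_congr rfl fun jj _ => ?_
  by_cases h1 : (jj : ℕ) < e
  · rw [if_pos h1, eval_mul, if_pos h1, eval_mul, eval_pow, eval_X, hx,
      mul_zero, mul_zero, zero_mul]
  · rw [if_neg h1, eval_mul, if_neg h1, eval_mul, eval_pow, eval_X]; ring

end Bezout

section Crux
variable {K : Type*} [Field K] {r : ℕ}
open Polynomial

lemma monomial_one_pow (n : Fin r →₀ ℕ) (j : ℕ) :
    (MvPowerSeries.monomial n (1 : K)) ^ j = MvPowerSeries.monomial (j • n) 1 := by
  induction j with
  | zero => simp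
  | succ j ih =>
      rw [pow_succ, ih, MvPowerSeries.monomial_mul_monomial, succ_nsmul, mul_one]

lemma Pk_coeff (P : Polynomial (MvPowerSeries (Fin r) K)) (y0 : MvPowerSeries (Fin r) K)
    (S : (Fin r →₀ ℕ) → (Fin r →₀ ℕ)) (k : Fin r →₀ ℕ) (j : ℕ) :
    (Pk P y0 S k).coeff j =
      MvPowerSeries.monomial (j • S k) 1 * (taylor (zk y0 k) P).coeff j := by
  rw [show Pk P y0 S k = P.comp (Polynomial.C (zk y0 k) +
      Polynomial.C ((MvPowerSeries.monomial (S k)) 1) * Polynomial.X) from rfl,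
    coeff_comp_linear, monomial_one_pow]

lemma crux {P : Polynomial (MvPowerSeries (Fin r) K)} {y0 : MvPowerSeries (Fin r) K}
    (hroot : Polynomial.eval y0 P = 0)
    {S : (Fin r →₀ ℕ) → (Fin r →₀ ℕ)} (hS : IsSucc S)
    {w : Fin r →₀ ℕ}
    (hw1 : MvPowerSeries.coeff w (Polynomial.eval y0 (derivative P)) ≠ 0)
    (hw2 : ∀ e, grlt e w → MvPowerSeries.coeff e (Polynomial.eval y0 (derivative P)) = 0)
    {k : Fin r →₀ ℕ} (hk : grle w k) :
    IsW (Pk P y0 S k) (w + S k) := by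
  set z := zk y0 k with hz
  set ek := y0 - z with hek
  set g := Polynomial.eval y0 (derivative P) with hg
  -- every exponent in ek is ≥ S k
  have hekc : ∀ p, MvPowerSeries.coeff p ek ≠ 0 → grle (S k) p := by
    intro p hp
    have hpk : ¬ grle p k := by
      intro hle
      apply hp
      rw [hek, map_sub]
      have hzz : MvPowerSeries.coeff p z = MvPowerSeries.coeff p y0 := by
        rw [hz, MvPowerSeries.coeff_apply]
        show (if grle p k then MvPowerSeries.coeff p y0 else 0) = _
        rw [if_pos hle]
      rw [hzz, sub_self]
    exact (hS k).2 p (grlt_of_not_grle hpk)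
  set Q := taylor z P with hQ
  set f1 := Q.coeff 1 with hf1
  have hf1' : f1 = Polynomial.eval z (derivative P) := taylor_coeff_one z P
  have hSk_w : grlt w (S k) := grlt_of_grle_of_grlt hk (hS k).1
  -- C1 : low coefficients of f1 agree with those of g
  have C1 : ∀ m, grle m w → MvPowerSeries.coeff m f1 = MvPowerSeries.coeff m g := by
    intro m hm
    obtain ⟨h, hh⟩ := sub_dvd_eval_sub y0 z (derivative P)
    have hdiff : g - f1 = ek * h := by rw [hf1', hg, hek]; exact hh
    have hcz : MvPowerSeries.coeff m (g - f1) = 0 := by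
      rw [hdiff]
      by_contra hne
      have hgl := coeff_mul_grle hekc (fun q _ => grle_zero q) m hne
      rw [add_zero] at hgl
      exact not_grle_of_grlt (grlt_of_grle_of_grlt hm hSk_w) hgl
    rw [map_sub, sub_eq_zero] at hcz
    exact hcz.symm
  have hf1low : ∀ p, MvPowerSeries.coeff p f1 ≠ 0 → grle w p := by
    intro p hp
    by_contra hc
    have hlt : grlt p w := grlt_of_not_grle hc
    exact hp ((C1 p (Or.inl hlt)).trans (hw2 p hlt))
  -- the constant coefficient of Q
  obtain ⟨G, hG⟩ := exists_quadratic_remainder Q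
  have heval : Q.eval ek = 0 := by
    rw [hQ, taylor_eval, hek, sub_add_cancel, hroot]
  have hb0 : Q.coeff 0 = -(f1 * ek) - ek * (ek * Polynomial.eval ek G) := by
    have h1 := congrArg (Polynomial.eval ek) hG
    rw [heval] at h1
    simp only [eval_add, eval_mul, eval_C, eval_X, eval_pow] at h1
    rw [← hf1] at h1
    linear_combination -h1
  have hb0low : ∀ p, MvPowerSeries.coeff p (Q.coeff 0) ≠ 0 → grle (w + S k) p := by
    intro p hp
    rw [hb0] at hp
    have hcases : MvPowerSeries.coeff p (f1 * ek) ≠ 0 ∨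
        MvPowerSeries.coeff p (ek * (ek * Polynomial.eval ek G)) ≠ 0 := by
      by_contra hcc
      push_neg at hcc
      apply hp
      rw [map_sub, map_neg, hcc.1, hcc.2, neg_zero, zero_sub, neg_zero]
    rcases hcases with hA | hB
    · exact coeff_mul_grle hf1low hekc p hA
    · have hin : ∀ q, MvPowerSeries.coeff q (ek * Polynomial.eval ek G) ≠ 0 →
          grle (S k) q := by
        intro q hq
        have := coeff_mul_grle hekc (fun q' _ => grle_zero q') q hq
        rwa [add_zero] at this
      have h2 := coeff_mul_grle hekc hin p hB
      exact grle_trans (grle_add (Or.inl hSk_w) (grle_refl (S k))) h2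
  -- assemble
  constructor
  · refine ⟨1, ?_⟩
    rw [Pk_coeff, MvPowerSeries.coeff_monomial_mul, one_smul,
      if_pos (le_add_self : S k ≤ w + S k), one_mul, add_tsub_cancel_right]
    rw [← hz, ← hQ, ← hf1, C1 w (grle_refl w)]
    exact hw1
  · intro e he j
    rw [Pk_coeff, MvPowerSeries.coeff_monomial_mul, ← hz, ← hQ]
    split_ifs with hle
    swap
    · rfl
    rw [one_mul]
    match j with
    | 0 =>
        simp only [zero_smul, tsub_zero]
        by_contra hne
        exact not_grle_of_grlt he (hb0low e hne)
    | 1 =>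
        rw [one_smul] at hle ⊢
        by_contra hne
        have hge := hf1low _ hne
        have : grle (w + S k) e := by
          have := grle_add hge (grle_refl (S k))
          rwa [tsub_add_cancel_of_le hle] at this
        exact not_grle_of_grlt he this
    | (j + 2) =>
        exfalso
        have h2le : S k + S k ≤ (j + 2) • S k := by
          intro x
          simp only [Finsupp.add_apply, Finsupp.smul_apply, smul_eq_mul]
          nlinarith [Nat.zero_le ((S k) x)]
        have : grle (w + S k) e :=
          grle_trans (grle_add (Or.inl hSk_w) (grle_refl (S k)))
            (grle_trans (grle_of_le h2le) (grle_of_le hle))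
        exact not_grle_of_grlt he this

end Crux

/-- **The separation index `k₀` is bounded by the order of the discriminant.**
Let `P ∈ K[[u₁,…,u_r]][y]` be nonzero of degree at most `d_y` in `y`, with nonzero
discriminant `Δ_P`, and let `y₀` (with `c₀ ≠ 0`) be a root of `P`.  Then the
`≤grlex`-smallest multi-index `k₀` with `i_{S(k₀)} = i_{k₀} − S(k₀) + S²(k₀)` satisfies
`|k₀| ≤ ord Δ_P`. -/
theorem k0_le_order_discrim {K : Type*} [Field K] [CharZero K] {r : ℕ} (hr : 1 ≤ r)
    (dy : ℕ) (P : Polynomial (MvPowerSeries (Fin r) K)) (hP : P ≠ 0)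
    (hdy : P.natDegree ≤ dy) (hΔ : discrim' P ≠ 0)
    (y0 : MvPowerSeries (Fin r) K)
    (hc0 : MvPowerSeries.constantCoeff y0 ≠ 0)
    (hroot : Polynomial.eval y0 P = 0)
    (S : (Fin r →₀ ℕ) → (Fin r →₀ ℕ)) (hS : IsSucc S)
    (i : (Fin r →₀ ℕ) → (Fin r →₀ ℕ)) (hi : ∀ k, IsW (Pk P y0 S k) (i k))
    (k0 : Fin r →₀ ℕ)
    (hk0 : (i (S k0) + S k0 = i k0 + S (S k0)) ∧
      ∀ k, i (S k) + S k = i k + S (S k) → grle k0 k) :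
    ((degOf k0 : ℕ∞)) ≤ MvPowerSeries.order (discrim' P) := by
  have hd0 : P.natDegree ≠ 0 := by
    intro h
    obtain ⟨a, ha⟩ := Polynomial.natDegree_eq_zero.1 h
    rw [← ha] at hP
    rw [← ha, Polynomial.eval_C] at hroot
    exact hP (by rw [hroot, map_zero])
  obtain ⟨B, hB⟩ := discrim'_eq_mul P hd0 hroot
  set g := Polynomial.eval y0 (Polynomial.derivative P) with hg
  have hgne : g ≠ 0 := fun h => hΔ (by rw [hB, h, mul_zero])
  obtain ⟨w, hw1, hw2⟩ := exists_grlex_min g hgne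
  have e1 : i w = w + S w := IsW_unique (hi w) (crux hroot hS hw1 hw2 (grle_refl w))
  have e2 : i (S w) = w + S (S w) :=
    IsW_unique (hi (S w)) (crux hroot hS hw1 hw2 (Or.inl (hS w).1))
  have key : i (S w) + S w = i w + S (S w) := by
    rw [e1, e2, add_right_comm]
  have hk0w : grle k0 w := hk0.2 w key
  have hdeg : degOf k0 ≤ degOf w := degOf_le_of_grle hk0w
  refine MvPowerSeries.le_order fun dd hdd => ?_
  have hdd' : Finsupp.degree dd < degOf k0 := by exact_mod_cast hdd
  rw [hB, MvPowerSeries.coeff_mul]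
  refine Finset.sum_eq_zero fun p hp => ?_
  have hsum : p.1 + p.2 = dd := Finset.HasAntidiagonal.mem_antidiagonal.1 hp
  have hle2 : degOf p.2 ≤ Finsupp.degree dd := by
    have : degOf p.2 ≤ degOf dd := by
      rw [← hsum, degOf_add]; omega
    exact this
  have hlt : grlt p.2 w := Or.inl (by
    have : degOf p.2 < degOf k0 := lt_of_le_of_lt hle2 hdd'
    have h2 : degOf p.2 < degOf w := lt_of_lt_of_le this hdeg
    exact h2)
  rw [hw2 p.2 hlt, mul_zero]
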